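/- Suppose ĝ_pert and ĝ both satisfy |ĝ_pert(k) - ĝ(k)| ≤ C e^{-(d+σ)|k|} and ‖ĝ_pert - ĝ‖_{L²} ≤ δ₀, with C, d, σ > 0 and 0 ≤ γ < σ/2. Then ‖ e^{|k|(d+γ)} (ĝ_pert(k) - ĝ(k)) ‖²_{L²(dk)} ≤ K · δ₀^{2(σ-γ)/(d+σ)}, where K depends only on C, d, σ, γ. -/

import Mathlib

open MeasureTheory

open Real Set in
/-- The value of the exponentially decaying tail integral. -/
lemma tail_lintegral_eval (c b R : ℝ) (hc : 0 ≤ c) (hb : 0 < b) (hR : 0 < R) :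
    ∫⁻ x in Ioi R, ENNReal.ofReal (c * Real.exp (-b * x)) =
      ENNReal.ofReal (c * b⁻¹ * Real.exp (-(b * R))) := by
  have hint : IntegrableOn (fun x : ℝ => c * Real.exp (-b * x)) (Ioi R) :=
    (exp_neg_integrableOn_Ioi R hb).const_mul c
  rw [← ofReal_integral_eq_lintegral_ofReal hint
      (Filter.Eventually.of_forall fun x => by positivity)]
  congr 1
  rw [MeasureTheory.integral_const_mul]
  have : (∫ x in Ioi R, Real.exp (-b * x)) = b⁻¹ * Real.exp (-(b * R)) := by
    have h := integral_comp_mul_left_Ioi (fun y => Real.exp (-y)) R hb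
    simp only [smul_eq_mul] at h
    have h2 : (∫ x in Ioi R, Real.exp (-(b * x))) = b⁻¹ * Real.exp (-(b * R)) := by
      rw [h, integral_exp_neg_Ioi]
    simpa only [neg_mul] using h2
  rw [this]; ring

open Real Set in
/-- Reflection identity for the lintegral of an even function. -/
lemma lintegral_Iio_neg (G : ℝ → ENNReal) (hG : Measurable G) (R : ℝ) :
    ∫⁻ x in Iio (-R), G x = ∫⁻ x in Ioi R, G (-x) := by
  have hne : Measurable (fun x : ℝ => -x) := measurable_neg
  have hemb : MeasurableEmbedding (fun x : ℝ => -x) :=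
    (Homeomorph.neg ℝ).measurableEmbedding
  calc ∫⁻ x in Iio (-R), G x
      = ∫⁻ x in Iio (-R), G x ∂(Measure.map (fun x : ℝ => -x) volume) := by
        rw [Measure.map_neg_eq_self (volume : Measure ℝ)]
    _ = ∫⁻ x in (fun x : ℝ => -x) ⁻¹' (Iio (-R)), G (-x) := by
        rw [setLIntegral_map measurableSet_Iio hG hne]
    _ = ∫⁻ x in Ioi R, G (-x) := by
        congr 1
        ext x
        simp [neg_lt]

theorem weighted_interpolation_bound (C d σ γ : ℝ)
    (hC : 0 < C) (hd : 0 < d) (hσ : 0 < σ) (hγ : 0 ≤ γ) (hγσ : γ < σ / 2) :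
    ∃ K : ℝ, 0 < K ∧
      ∀ (gpert g : ℝ → ℂ) (δ₀ : ℝ), 0 < δ₀ →
        Measurable gpert → Measurable g →
        (∀ k : ℝ, ‖gpert k - g k‖ ≤ C * Real.exp (-(d + σ) * |k|)) →
        eLpNorm (fun k => gpert k - g k) 2 volume ≤ ENNReal.ofReal δ₀ →
        δ₀ ^ 2 * ((σ - 2 * γ) * (d + γ)) < C ^ 2 * (σ - γ) →
        (∫⁻ k : ℝ, ENNReal.ofReal
            ((Real.exp (|k| * (d + γ))) ^ 2 * ‖gpert k - g k‖ ^ 2)) ≤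
          ENNReal.ofReal (K * δ₀ ^ (2 * (σ - γ) / (d + σ))) := by
  have hB : 0 < σ - γ := by linarith
  have hA : 0 < d + γ := by linarith
  have hσ2 : 0 < σ - 2 * γ := by linarith
  have hds : 0 < d + σ := by linarith
  set M : ℝ := C ^ 2 * (σ - γ) / ((σ - 2 * γ) * (d + γ)) with hM_def
  have hM : 0 < M := by positivity
  set p : ℝ := (d + γ) / (d + σ) with hp_def
  set q : ℝ := (σ - γ) / (d + σ) with hq_def
  refine ⟨M ^ p + C ^ 2 / (σ - γ) * M ^ (-q), by positivity, ?_⟩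
  intro gpert g δ₀ hδ hmp hmg hptw hL2 hsmall
  set f : ℝ → ℂ := fun k => gpert k - g k with hf_def
  have hfm : Measurable f := hmp.sub hmg
  set R : ℝ := Real.log (M / δ₀ ^ 2) / (2 * (d + σ)) with hR_def
  have hδM : δ₀ ^ 2 < M := by
    rw [hM_def, lt_div_iff₀ (by positivity)]
    linarith
  have hMδ : 1 < M / δ₀ ^ 2 := by
    rw [lt_div_iff₀ (by positivity)]; simpa using hδM
  have hR : 0 < R := div_pos (Real.log_pos hMδ) (by positivity)
  -- key exponential identity
  have hpow : ∀ c : ℝ, Real.exp (c * R) =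
      M ^ (c / (2 * (d + σ))) * δ₀ ^ (-(c / (d + σ))) := by
    intro c
    rw [Real.rpow_def_of_pos hM, Real.rpow_def_of_pos hδ, ← Real.exp_add]
    congr 1
    have hlog : Real.log (M / δ₀ ^ 2) = Real.log M - 2 * Real.log δ₀ := by
      rw [Real.log_div hM.ne' (by positivity), Real.log_pow]
      push_cast; ring
    rw [hR_def, hlog]
    field_simp
    ring
  -- the weighted integrand
  set F : ℝ → ENNReal := fun k =>
    ENNReal.ofReal ((Real.exp (|k| * (d + γ))) ^ 2 * ‖f k‖ ^ 2) with hF_def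
  have hFm : Measurable F := by
    apply ENNReal.measurable_ofReal.comp
    exact ((Real.measurable_exp.comp ((measurable_abs).mul_const _)).pow_const 2).mul
      ((hfm.norm).pow_const 2)
  -- L² bound
  have hL2' : (∫⁻ k : ℝ, ENNReal.ofReal (‖f k‖ ^ 2)) ≤ ENNReal.ofReal (δ₀ ^ 2) := by
    have h := eLpNorm_eq_lintegral_rpow_enorm_toReal (p := 2) (f := f) (μ := volume)
      two_ne_zero ENNReal.ofNat_ne_top
    rw [h] at hL2
    have htoReal : (2 : ENNReal).toReal = 2 := by simp
    rw [htoReal] at hL2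
    have h2 : (∫⁻ x : ℝ, (‖f x‖₊ : ENNReal) ^ (2:ℝ)) ≤ (ENNReal.ofReal δ₀) ^ (2:ℝ) := by
      have h3 := ENNReal.rpow_le_rpow hL2 (by norm_num : (0:ℝ) ≤ 2)
      rwa [← ENNReal.rpow_mul, one_div, inv_mul_cancel₀ (by norm_num : (2:ℝ) ≠ 0),
        ENNReal.rpow_one] at h3
    calc (∫⁻ k : ℝ, ENNReal.ofReal (‖f k‖ ^ 2))
        = ∫⁻ k : ℝ, (‖f k‖₊ : ENNReal) ^ (2:ℝ) := by
          refine lintegral_congr fun k => ?_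
          rw [← enorm_eq_nnnorm, ← ofReal_norm,
            ENNReal.ofReal_rpow_of_nonneg (norm_nonneg _) (by norm_num : (0:ℝ) ≤ 2)]
          congr 1
          rw [← Real.rpow_natCast ‖f k‖ 2]
          norm_num
      _ ≤ (ENNReal.ofReal δ₀) ^ (2:ℝ) := h2
      _ = ENNReal.ofReal (δ₀ ^ 2) := by
          rw [ENNReal.ofReal_rpow_of_pos hδ]
          congr 1
          rw [← Real.rpow_natCast δ₀ 2]
          norm_num
  -- set splitting
  set s : Set ℝ := {k : ℝ | |k| ≤ R} with hs_def
  have hs : MeasurableSet s := measurableSet_le measurable_abs measurable_const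
  have hsplit : (∫⁻ k, F k) = (∫⁻ k in s, F k) + ∫⁻ k in sᶜ, F k :=
    (lintegral_add_compl F hs).symm
  -- inner estimate
  have hinner : (∫⁻ k in s, F k) ≤
      ENNReal.ofReal (Real.exp (2 * (d + γ) * R) * δ₀ ^ 2) := by
    have hptws : ∀ k ∈ s, F k ≤
        ENNReal.ofReal (Real.exp (2 * (d + γ) * R)) * ENNReal.ofReal (‖f k‖ ^ 2) := by
      intro k hk
      rw [← ENNReal.ofReal_mul (Real.exp_pos _).le]
      apply ENNReal.ofReal_le_ofReal
      have hk' : |k| ≤ R := hk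
      have hexp : (Real.exp (|k| * (d + γ))) ^ 2 ≤ Real.exp (2 * (d + γ) * R) := by
        rw [sq, ← Real.exp_add]
        apply Real.exp_le_exp.2
        nlinarith [abs_nonneg k]
      exact mul_le_mul_of_nonneg_right hexp (by positivity)
    calc (∫⁻ k in s, F k)
        ≤ ∫⁻ k in s, ENNReal.ofReal (Real.exp (2 * (d + γ) * R)) *
            ENNReal.ofReal (‖f k‖ ^ 2) :=
          setLIntegral_mono (by fun_prop) hptws
      _ = ENNReal.ofReal (Real.exp (2 * (d + γ) * R)) *
            ∫⁻ k in s, ENNReal.ofReal (‖f k‖ ^ 2) :=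
          lintegral_const_mul' _ _ ENNReal.ofReal_ne_top
      _ ≤ ENNReal.ofReal (Real.exp (2 * (d + γ) * R)) *
            ∫⁻ k, ENNReal.ofReal (‖f k‖ ^ 2) :=
          mul_le_mul_right (setLIntegral_le_lintegral _ _) _
      _ ≤ ENNReal.ofReal (Real.exp (2 * (d + γ) * R)) * ENNReal.ofReal (δ₀ ^ 2) :=
          mul_le_mul_right hL2' _
      _ = ENNReal.ofReal (Real.exp (2 * (d + γ) * R) * δ₀ ^ 2) :=
          (ENNReal.ofReal_mul (Real.exp_pos _).le).symm
  -- pointwise decay bound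
  have houter_ptw : ∀ k : ℝ, F k ≤
      ENNReal.ofReal (C ^ 2 * Real.exp (-(2 * (σ - γ)) * |k|)) := by
    intro k
    apply ENNReal.ofReal_le_ofReal
    have h2 : ‖f k‖ ^ 2 ≤ (C * Real.exp (-(d + σ) * |k|)) ^ 2 :=
      pow_le_pow_left₀ (norm_nonneg _) (hptw k) 2
    calc (Real.exp (|k| * (d + γ))) ^ 2 * ‖f k‖ ^ 2
        ≤ (Real.exp (|k| * (d + γ))) ^ 2 * (C * Real.exp (-(d + σ) * |k|)) ^ 2 :=
          mul_le_mul_of_nonneg_left h2 (by positivity)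
      _ = C ^ 2 * (Real.exp (|k| * (d + γ)) * Real.exp (-(d + σ) * |k|)) ^ 2 := by ring
      _ = C ^ 2 * Real.exp (-(2 * (σ - γ)) * |k|) := by
          rw [← Real.exp_add, ← Real.exp_nat_mul]
          congr 1
          ring
  -- the even majorant
  set G : ℝ → ENNReal := fun k =>
    ENNReal.ofReal (C ^ 2 * Real.exp (-(2 * (σ - γ)) * |k|)) with hG_def
  have hGm : Measurable G := by
    apply ENNReal.measurable_ofReal.comp
    exact measurable_const.mul
      (Real.measurable_exp.comp (measurable_abs.const_mul _))
  -- outer estimate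
  have houter : (∫⁻ k in sᶜ, F k) ≤
      ENNReal.ofReal (C ^ 2 / (σ - γ) * Real.exp (-(2 * (σ - γ) * R))) := by
    have hsub : sᶜ ⊆ Set.Iio (-R) ∪ Set.Ioi R := by
      intro k hk
      simp only [Set.mem_compl_iff, hs_def, Set.mem_setOf_eq, not_le] at hk
      rcases lt_abs.mp hk with h | h
      · exact Or.inr h
      · exact Or.inl (by simpa [lt_neg] using h)
    calc (∫⁻ k in sᶜ, F k) ≤ ∫⁻ k in sᶜ, G k :=
          setLIntegral_mono hGm fun k _ => houter_ptw k
      _ ≤ ∫⁻ k in Set.Iio (-R) ∪ Set.Ioi R, G k := lintegral_mono_set hsub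
      _ ≤ (∫⁻ k in Set.Iio (-R), G k) + ∫⁻ k in Set.Ioi R, G k :=
          lintegral_union_le _ _ _
      _ = (∫⁻ k in Set.Ioi R, G k) + ∫⁻ k in Set.Ioi R, G k := by
          rw [lintegral_Iio_neg G hGm R]
          congr 1
          refine lintegral_congr fun k => ?_
          rw [hG_def]
          simp [abs_neg]
      _ = 2 * ∫⁻ k in Set.Ioi R, G k := (two_mul _).symm
      _ = 2 * ∫⁻ k in Set.Ioi R,
            ENNReal.ofReal (C ^ 2 * Real.exp (-(2 * (σ - γ)) * k)) := by
          congr 1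
          refine setLIntegral_congr_fun measurableSet_Ioi
            (fun k hk => ?_)
          rw [hG_def]
          simp only
          rw [abs_of_pos (hR.trans hk)]
      _ = 2 * ENNReal.ofReal (C ^ 2 * (2 * (σ - γ))⁻¹ *
            Real.exp (-(2 * (σ - γ) * R))) := by
          rw [tail_lintegral_eval (C ^ 2) (2 * (σ - γ)) R (by positivity)
            (by positivity) hR]
      _ = ENNReal.ofReal (C ^ 2 / (σ - γ) * Real.exp (-(2 * (σ - γ) * R))) := by
          rw [show (2 : ENNReal) = ENNReal.ofReal (2:ℝ) by simp,
            ← ENNReal.ofReal_mul (by norm_num)]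
          congr 1
          field_simp
  -- combine and rewrite in terms of powers of δ₀
  calc (∫⁻ k : ℝ, ENNReal.ofReal
          ((Real.exp (|k| * (d + γ))) ^ 2 * ‖gpert k - g k‖ ^ 2))
      = (∫⁻ k in s, F k) + ∫⁻ k in sᶜ, F k := hsplit
    _ ≤ ENNReal.ofReal (Real.exp (2 * (d + γ) * R) * δ₀ ^ 2) +
        ENNReal.ofReal (C ^ 2 / (σ - γ) * Real.exp (-(2 * (σ - γ) * R))) :=
        add_le_add hinner houter
    _ = ENNReal.ofReal (Real.exp (2 * (d + γ) * R) * δ₀ ^ 2 +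
        C ^ 2 / (σ - γ) * Real.exp (-(2 * (σ - γ) * R))) :=
        (ENNReal.ofReal_add (by positivity) (by positivity)).symm
    _ ≤ ENNReal.ofReal ((M ^ p + C ^ 2 / (σ - γ) * M ^ (-q)) *
        δ₀ ^ (2 * (σ - γ) / (d + σ))) := by
        apply ENNReal.ofReal_le_ofReal
        apply le_of_eq
        have e1 : Real.exp (2 * (d + γ) * R) * δ₀ ^ 2 =
            M ^ p * δ₀ ^ (2 * (σ - γ) / (d + σ)) := by
          rw [hpow (2 * (d + γ)), ← Real.rpow_natCast δ₀ 2, mul_assoc,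
            ← Real.rpow_add hδ]
          congr 1
          · congr 1
            rw [hp_def]
            field_simp
          · congr 1
            push_cast
            field_simp
            ring
        have e2 : Real.exp (-(2 * (σ - γ) * R)) =
            M ^ (-q) * δ₀ ^ (2 * (σ - γ) / (d + σ)) := by
          rw [← neg_mul, hpow (-(2 * (σ - γ)))]
          congr 1
          · congr 1
            rw [hq_def]
            field_simp
          · congr 1
            field_simp
        rw [e1, e2]
        ring
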